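/- arXiv:2304.14250 — 2 statements merged into one kernel-verified Lean document; each statement's English description precedes it below -/
import Mathlib

section
/- Fix 1 < p < ∞ with p′ = p/(p−1), let w be a discrete weight in the discrete Muckenhoupt class A_p, and suppose the dual operator M′h := M(w·h)/w is bounded on ℓ_{p′}(w) with operator norm ‖M′‖_{ℓ_{p′}(w)} > 0. For any nonnegative sequence h ∈ ℓ_{p′}(w), not identically zero, the sequence N′h(n) := ∑_{s=0}^{∞} (M′)^s h(n) / (2^s ‖M′‖_{ℓ_{p′}(w)}^s) satisfies: (a) h(n) ≤ N′h(n) for all n ≥ 1; (b) ‖N′h‖_{ℓ_{p′}(w)} ≤ 2‖h‖_{ℓ_{p′}(w)}; (c) the weight (N′h)·w belongs to the class A_1 with [(N′h)·w]_{A_1} ≤ 2‖M′‖_{ℓ_{p′}(w)}. -/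
open Finset Real Filter

noncomputable section

/-- Average of a sequence over the interval `[a, b]` of positive integers. -/
def intervalAvg (f : ℕ → ℝ) (a b : ℕ) : ℝ :=
  ((Finset.Icc a b).card : ℝ)⁻¹ * ∑ k ∈ Finset.Icc a b, f k

/-- Discrete Hardy–Littlewood maximal operator: the supremum of the averages of `f`
over all intervals `[a, b] ⊆ [1, ∞)` of positive integers containing `n`. -/
def maxOp (f : ℕ → ℝ) : ℕ → ℝ := fun n =>
  sSup {x : ℝ | ∃ a b : ℕ, 1 ≤ a ∧ a ≤ n ∧ n ≤ b ∧ x = intervalAvg f a b}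

/-- The `A_p` quotient of a weight `w` at scale `n`. -/
def apQuot (p : ℝ) (w : ℕ → ℝ) (n : ℕ) : ℝ :=
  ((n : ℝ)⁻¹ * ∑ k ∈ Finset.Icc 1 n, w k) *
    ((n : ℝ)⁻¹ * ∑ k ∈ Finset.Icc 1 n, w k ^ (-1 / (p - 1))) ^ (p - 1)

/-- Membership in the discrete Muckenhoupt class `A_p` (`1 < p < ∞`): the `A_p`
quotients are bounded over all scales `n ≥ 1`. -/
def MemAp (p : ℝ) (w : ℕ → ℝ) : Prop :=
  BddAbove {x : ℝ | ∃ n : ℕ, 1 ≤ n ∧ x = apQuot p w n}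

/-- The `A_p` norm `[w]_{A_p}`: the supremum of the `A_p` quotients over `n ≥ 1`. -/
def apNorm (p : ℝ) (w : ℕ → ℝ) : ℝ :=
  sSup {x : ℝ | ∃ n : ℕ, 1 ≤ n ∧ x = apQuot p w n}

/-- `C` is an `A₁` constant for `w`: `Mw(n) ≤ C · w(n)` for all `n ≥ 1`, i.e. every
interval average of `w` over an interval containing `n` is at most `C · w(n)`. -/
def IsA1Bound (w : ℕ → ℝ) (C : ℝ) : Prop :=
  ∀ a b n : ℕ, 1 ≤ a → a ≤ n → n ≤ b → intervalAvg w a b ≤ C * w n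

/-- Membership in the discrete Muckenhoupt class `A₁`. -/
def MemA1 (w : ℕ → ℝ) : Prop := ∃ C : ℝ, IsA1Bound w C

/-- The `A₁` norm `[w]_{A₁}`: the least `A₁` constant of `w`. -/
def a1Norm (w : ℕ → ℝ) : ℝ := sInf {C : ℝ | IsA1Bound w C}

/-- The weighted norm `‖f‖_{ℓ_r(w)} = (∑_{k=1}^∞ w(k) |f(k)|^r)^{1/r}`. -/
def lpNormW (r : ℝ) (w f : ℕ → ℝ) : ℝ :=
  (∑' k : ℕ, w (k + 1) * |f (k + 1)| ^ r) ^ (1 / r)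

/-- `f ∈ ℓ_r(w)`: the series `∑_{k=1}^∞ w(k)|f(k)|^r` converges, i.e.
`‖f‖_{ℓ_r(w)} < ∞`. -/
def MemLp (r : ℝ) (w f : ℕ → ℝ) : Prop :=
  Summable fun k : ℕ => w (k + 1) * |f (k + 1)| ^ r

/-- `C` is a bound for the maximal operator `M` on `ℓ_r(w)` over nonnegative
sequences. -/
def IsMaxBound (r : ℝ) (w : ℕ → ℝ) (C : ℝ) : Prop :=
  ∀ f : ℕ → ℝ, (∀ k, 0 ≤ f k) → MemLp r w f →
    lpNormW r w (maxOp f) ≤ C * lpNormW r w f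

/-- The operator norm `‖M‖_{ℓ_r(w)}`: the least nonnegative bound for `M` on
`ℓ_r(w)`. -/
def maxOpNorm (r : ℝ) (w : ℕ → ℝ) : ℝ := sInf {C : ℝ | 0 ≤ C ∧ IsMaxBound r w C}

/-- The dual maximal operator `M'h = M(w·h)/w`. -/
def dualOp (w h : ℕ → ℝ) : ℕ → ℝ := fun n => maxOp (fun k => w k * h k) n / w n

/-- `C` is a bound for the dual maximal operator `M'` on `ℓ_r(w)` over nonnegative
sequences. -/
def IsDualBound (r : ℝ) (w : ℕ → ℝ) (C : ℝ) : Prop :=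
  ∀ h : ℕ → ℝ, (∀ k, 0 ≤ h k) → MemLp r w h →
    lpNormW r w (dualOp w h) ≤ C * lpNormW r w h

/-- The operator norm `‖M'‖_{ℓ_r(w)}`. -/
def dualOpNorm (r : ℝ) (w : ℕ → ℝ) : ℝ := sInf {C : ℝ | 0 ≤ C ∧ IsDualBound r w C}

/-- The Rubio de Francia algorithm
`Nh(n) = ∑_{s=0}^∞ M^s h(n) / (2^s ‖M‖_{ℓ_p(w)}^s)`. -/
def rdfN (p : ℝ) (w h : ℕ → ℝ) : ℕ → ℝ := fun n =>
  ∑' s : ℕ, maxOp^[s] h n / (2 ^ s * maxOpNorm p w ^ s)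

/-- The dual Rubio de Francia algorithm
`N'h(n) = ∑_{s=0}^∞ (M')^s h(n) / (2^s ‖M'‖_{ℓ_r(w)}^s)`. -/
def rdfNdual (r : ℝ) (w h : ℕ → ℝ) : ℕ → ℝ := fun n =>
  ∑' s : ℕ, (dualOp w)^[s] h n / (2 ^ s * dualOpNorm r w ^ s)

/-- The `A_∞` quotient of a weight `w` at scale `n`. -/
def aInfQuot (w : ℕ → ℝ) (n : ℕ) : ℝ :=
  ((n : ℝ)⁻¹ * ∑ k ∈ Finset.Icc 1 n, w k) *
    Real.exp ((n : ℝ)⁻¹ * ∑ k ∈ Finset.Icc 1 n, Real.log (1 / w k))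

/-- Membership in the discrete Muckenhoupt class `A_∞`. -/
def MemAInf (w : ℕ → ℝ) : Prop :=
  BddAbove {x : ℝ | ∃ n : ℕ, 1 ≤ n ∧ x = aInfQuot w n}

/-- The `A_∞` norm `[w]_{A_∞}`. -/
def aInfNorm (w : ℕ → ℝ) : ℝ :=
  sSup {x : ℝ | ∃ n : ℕ, 1 ≤ n ∧ x = aInfQuot w n}

/-!
Write `K = ‖M'‖` and `σ = w ^ (1 - p')`. The terms `(M')ˢh / (2K)ˢ` have norm at most
`2⁻ˢ ‖h‖`, so the series converges pointwise (the point evaluation at `n` is bounded by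
`w(n) ^ (-1 / p')`) and, by Minkowski and Fatou, in `ℓ_{p'}(w)` with norm at most `2 ‖h‖`.
Since `M(w · (M')ˢh) = w · (M')ˢ⁺¹h`, the averages of `w · N'h` are at most `2K w N'h`.

The real work is to make `M'` an operator on `ℓ_{p'}(w)`: the hypothesis bounds `‖M'h‖` only
once `M'h` is known to lie in `ℓ_{p'}(w)`. For `h` supported in `[1, B]` one has
`M'h(n) ≲ 1 / (n w(n))`, which lies in `ℓ_{p'}(w)` because `∑ σ(n) / n ^ p' < ∞`; this follows
from the `A_p` condition, which forces `∑_{k ≤ 2 ^ j} w k` to grow geometrically in `j`.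
Truncations of a general `h` increase to `h`, and `M'` of them increase to `M'h`.
-/

open Topology

section MaximalOperator

variable {f g : ℕ → ℝ} {a b n : ℕ} {C : ℝ}

lemma intervalAvg_nonneg (hf : ∀ k, a ≤ k → 0 ≤ f k) : 0 ≤ intervalAvg f a b :=
  mul_nonneg (by positivity) (sum_nonneg fun k hk => hf k (mem_Icc.mp hk).1)

lemma intervalAvg_mono (hfg : ∀ k, a ≤ k → k ≤ b → f k ≤ g k) :
    intervalAvg f a b ≤ intervalAvg g a b :=
  mul_le_mul_of_nonneg_left
    (sum_le_sum fun k hk => hfg k (mem_Icc.mp hk).1 (mem_Icc.mp hk).2) (by positivity)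

lemma maxOp_zero (f : ℕ → ℝ) : maxOp f 0 = 0 := by
  have : {x : ℝ | ∃ a b : ℕ, 1 ≤ a ∧ a ≤ 0 ∧ 0 ≤ b ∧ x = intervalAvg f a b} = ∅ :=
    Set.eq_empty_of_forall_notMem fun _ ⟨a, _, ha, ha0, _⟩ => by omega
  rw [maxOp, this, Real.sSup_empty]

lemma maxOp_nonneg (hf : ∀ k, 1 ≤ k → 0 ≤ f k) (n : ℕ) : 0 ≤ maxOp f n :=
  Real.sSup_nonneg fun _ ⟨_, _, ha, _, _, hx⟩ =>
    hx ▸ intervalAvg_nonneg fun k hk => hf k (ha.trans hk)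

lemma maxOp_le (hn : 1 ≤ n)
    (hC : ∀ a b, 1 ≤ a → a ≤ n → n ≤ b → intervalAvg f a b ≤ C) : maxOp f n ≤ C :=
  csSup_le ⟨_, n, n, hn, le_rfl, le_rfl, rfl⟩ fun _ ⟨a, b, ha, han, hnb, hx⟩ =>
    hx ▸ hC a b ha han hnb

/-- `maxOp f n` is the `sSup` of a possibly unbounded set, whose junk value is `0`. -/
lemma intervalAvg_le_maxOp (hC : ∀ a b, 1 ≤ a → a ≤ n → n ≤ b → intervalAvg f a b ≤ C)
    (ha : 1 ≤ a) (han : a ≤ n) (hnb : n ≤ b) : intervalAvg f a b ≤ maxOp f n :=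
  le_csSup ⟨C, fun _ ⟨a, b, ha, han, hnb, hx⟩ => hx ▸ hC a b ha han hnb⟩
    ⟨a, b, ha, han, hnb, rfl⟩

lemma a1Norm_le_of_isA1Bound {w : ℕ → ℝ} (hC : IsA1Bound w C) (hC0 : 0 ≤ C) :
    a1Norm w ≤ C := by
  by_cases hbdd : BddBelow {C : ℝ | IsA1Bound w C}
  · exact csInf_le hbdd hC
  · rwa [a1Norm, Real.sInf_of_not_bddBelow hbdd]

lemma intervalAvg_tsum {u : ℕ → ℕ → ℝ} {a b : ℕ} (hu : ∀ k ∈ Icc a b, Summable (u · k)) :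
    intervalAvg (fun k => ∑' s, u s k) a b = ∑' s, intervalAvg (u s) a b := by
  simp only [intervalAvg, ← Summable.tsum_finsetSum hu, tsum_mul_left]

lemma intervalAvg_div_const (f : ℕ → ℝ) (d : ℝ) (a b : ℕ) :
    intervalAvg (fun k => f k / d) a b = intervalAvg f a b / d := by
  simp only [intervalAvg, ← sum_div, mul_div_assoc]

end MaximalOperator

section WeightedLp

variable {r C : ℝ} {w f g : ℕ → ℝ}

lemma weightedTerm_nonneg (hw : ∀ k, 1 ≤ k → 0 ≤ w k) (f : ℕ → ℝ) (k : ℕ) :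
    0 ≤ w (k + 1) * |f (k + 1)| ^ r :=
  mul_nonneg (hw _ k.succ_pos) (by positivity)

lemma lpNormW_nonneg (hw : ∀ k, 1 ≤ k → 0 ≤ w k) (f : ℕ → ℝ) : 0 ≤ lpNormW r w f :=
  Real.rpow_nonneg (tsum_nonneg (weightedTerm_nonneg hw f)) _

lemma tsum_eq_lpNormW_rpow (hw : ∀ k, 1 ≤ k → 0 ≤ w k) (hr : r ≠ 0) (f : ℕ → ℝ) :
    ∑' k, w (k + 1) * |f (k + 1)| ^ r = lpNormW r w f ^ r := by
  rw [lpNormW, one_div, Real.rpow_inv_rpow (tsum_nonneg (weightedTerm_nonneg hw f)) hr]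

lemma abs_le_lpNormW_mul_rpow (hw : ∀ k, 1 ≤ k → 0 ≤ w k) (hr : 0 < r) (hf : MemLp r w f)
    {n : ℕ} (hn : 1 ≤ n) (hwn : 0 < w n) : |f n| ≤ lpNormW r w f * w n ^ (-(1 / r)) := by
  have hnorm := lpNormW_nonneg hw f (r := r)
  have hterm : w n * |f n| ^ r ≤ lpNormW r w f ^ r := by
    obtain ⟨k, rfl⟩ := Nat.exists_eq_add_of_le' hn
    rw [← tsum_eq_lpNormW_rpow hw hr.ne']
    exact hf.le_tsum k fun j _ => weightedTerm_nonneg hw f j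
  rw [← Real.rpow_le_rpow_iff (abs_nonneg _) (by positivity) hr,
    Real.mul_rpow hnorm (by positivity), ← Real.rpow_mul hwn.le, neg_mul,
    one_div_mul_cancel hr.ne', Real.rpow_neg_one, ← div_eq_mul_inv, le_div_iff₀ hwn]
  linarith

lemma MemLp.mono (hw : ∀ k, 1 ≤ k → 0 ≤ w k) (hr : 0 ≤ r) (hg : MemLp r w g)
    (hfg : ∀ k, 1 ≤ k → |f k| ≤ |g k|) : MemLp r w f :=
  hg.of_nonneg_of_le (weightedTerm_nonneg hw f) fun k =>
    mul_le_mul_of_nonneg_left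
      (Real.rpow_le_rpow (abs_nonneg _) (hfg _ k.succ_pos) hr) (hw _ k.succ_pos)

lemma lpNormW_mono (hw : ∀ k, 1 ≤ k → 0 ≤ w k) (hr : 0 ≤ r) (hg : MemLp r w g)
    (hfg : ∀ k, 1 ≤ k → |f k| ≤ |g k|) : lpNormW r w f ≤ lpNormW r w g := by
  refine Real.rpow_le_rpow (tsum_nonneg (weightedTerm_nonneg hw f)) ?_ (by positivity)
  exact (hg.mono hw hr hfg).tsum_le_tsum (fun k =>
    mul_le_mul_of_nonneg_left
      (Real.rpow_le_rpow (abs_nonneg _) (hfg _ k.succ_pos) hr) (hw _ k.succ_pos)) hg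

lemma weightedTerm_div (f : ℕ → ℝ) {d : ℝ} (hd : 0 ≤ d) (k : ℕ) :
    w (k + 1) * |f (k + 1) / d| ^ r = w (k + 1) * |f (k + 1)| ^ r / d ^ r := by
  rw [abs_div, abs_of_nonneg hd, Real.div_rpow (abs_nonneg _) hd, mul_div_assoc]

lemma MemLp.div_const (hf : MemLp r w f) {d : ℝ} (hd : 0 ≤ d) :
    MemLp r w (fun k => f k / d) := by
  simpa only [MemLp, weightedTerm_div f hd] using Summable.div_const hf _

lemma lpNormW_div_const (hw : ∀ k, 1 ≤ k → 0 ≤ w k) (hr : r ≠ 0) (f : ℕ → ℝ) {d : ℝ}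
    (hd : 0 ≤ d) : lpNormW r w (fun k => f k / d) = lpNormW r w f / d := by
  simp only [lpNormW, weightedTerm_div f hd, tsum_div_const]
  rw [Real.div_rpow (tsum_nonneg (weightedTerm_nonneg hw f)) (by positivity), one_div,
    Real.rpow_rpow_inv hd hr]

/-- Minkowski's inequality is applied to the unweighted sequences `w ^ (1 / r) * f`. -/
lemma memLp_add_and_lpNormW_add_le (hw : ∀ k, 1 ≤ k → 0 ≤ w k) (hr : 1 ≤ r)
    (hf0 : ∀ k, 0 ≤ f k) (hg0 : ∀ k, 0 ≤ g k) (hf : MemLp r w f) (hg : MemLp r w g) :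
    MemLp r w (fun k => f k + g k) ∧
      lpNormW r w (fun k => f k + g k) ≤ lpNormW r w f + lpNormW r w g := by
  have hw' (k : ℕ) : 0 ≤ w (k + 1) := hw _ k.succ_pos
  have hpow (u : ℕ → ℝ) (hu : ∀ k, 0 ≤ u k) (k : ℕ) :
      (w (k + 1) ^ (1 / r) * u (k + 1)) ^ r = w (k + 1) * |u (k + 1)| ^ r := by
    rw [Real.mul_rpow (by have := hw' k; positivity) (hu _), ← Real.rpow_mul (hw' k),
      one_div_mul_cancel (by linarith), Real.rpow_one, abs_of_nonneg (hu _)]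
  have hsum (k : ℕ) : w (k + 1) ^ (1 / r) * f (k + 1) + w (k + 1) ^ (1 / r) * g (k + 1) =
      w (k + 1) ^ (1 / r) * (f (k + 1) + g (k + 1)) := by ring
  have hfg0 (k : ℕ) : 0 ≤ f k + g k := add_nonneg (hf0 k) (hg0 k)
  have hmink := Real.Lp_add_le_tsum_of_nonneg hr
    (f := fun k => w (k + 1) ^ (1 / r) * f (k + 1))
    (g := fun k => w (k + 1) ^ (1 / r) * g (k + 1))
    (fun k => mul_nonneg (Real.rpow_nonneg (hw' k) _) (hf0 (k + 1)))
    (fun k => mul_nonneg (Real.rpow_nonneg (hw' k) _) (hg0 (k + 1)))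
    (by simp only [hpow f hf0]; exact hf) (by simp only [hpow g hg0]; exact hg)
  simp only [hsum, hpow f hf0, hpow g hg0, hpow (fun k => f k + g k) hfg0] at hmink
  exact hmink

lemma memLp_sum_and_lpNormW_sum_le (hw : ∀ k, 1 ≤ k → 0 ≤ w k) (hr : 1 ≤ r) {ι : Type*}
    (s : Finset ι) {F : ι → ℕ → ℝ} (hF0 : ∀ i k, 0 ≤ F i k) (hF : ∀ i, MemLp r w (F i)) :
    MemLp r w (fun k => ∑ i ∈ s, F i k) ∧
      lpNormW r w (fun k => ∑ i ∈ s, F i k) ≤ ∑ i ∈ s, lpNormW r w (F i) := by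
  classical
  induction s using Finset.induction_on with
  | empty =>
    have hzero : (fun k : ℕ => w (k + 1) * |∑ i ∈ (∅ : Finset ι), F i (k + 1)| ^ r) = 0 := by
      ext k; simp [Real.zero_rpow (by linarith : r ≠ 0)]
    refine ⟨by rw [MemLp, hzero]; exact summable_zero, ?_⟩
    rw [lpNormW, hzero, Pi.zero_def, tsum_zero, Real.zero_rpow (by positivity), sum_empty]
  | insert i s hi ih =>
    simp only [sum_insert hi]
    obtain ⟨hmem, hle⟩ := memLp_add_and_lpNormW_add_le hw hr (hF0 i)
      (fun k => sum_nonneg fun j _ => hF0 j k) (hF i) ih.1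
    exact ⟨hmem, hle.trans (by linarith [ih.2])⟩

section Fatou

variable {F : ℕ → ℕ → ℝ}

lemma sum_range_le_rpow_of_tendsto (hw : ∀ k, 1 ≤ k → 0 ≤ w k) (hr : 0 < r)
    (hlim : ∀ k, Tendsto (fun S => F S (k + 1)) atTop (𝓝 (f (k + 1))))
    (hF : ∀ S, MemLp r w (F S)) (hC : ∀ S, lpNormW r w (F S) ≤ C) (N : ℕ) :
    ∑ k ∈ range N, w (k + 1) * |f (k + 1)| ^ r ≤ C ^ r := by
  have hbound (S : ℕ) : ∑ k ∈ range N, w (k + 1) * |F S (k + 1)| ^ r ≤ C ^ r :=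
    calc ∑ k ∈ range N, w (k + 1) * |F S (k + 1)| ^ r
        ≤ ∑' k, w (k + 1) * |F S (k + 1)| ^ r :=
          (hF S).sum_le_tsum _ fun k _ => weightedTerm_nonneg hw _ k
      _ = lpNormW r w (F S) ^ r := tsum_eq_lpNormW_rpow hw hr.ne' _
      _ ≤ C ^ r := Real.rpow_le_rpow (lpNormW_nonneg hw _) (hC S) hr.le
  have hcont : Continuous fun x : ℝ => |x| ^ r := continuous_abs.rpow_const fun _ => Or.inr hr.le
  exact le_of_tendsto' (tendsto_finsetSum _ fun k _ =>
    ((continuous_const.mul hcont).tendsto _).comp (hlim k)) hbound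

lemma MemLp.of_tendsto (hw : ∀ k, 1 ≤ k → 0 ≤ w k) (hr : 0 < r)
    (hlim : ∀ k, Tendsto (fun S => F S (k + 1)) atTop (𝓝 (f (k + 1))))
    (hF : ∀ S, MemLp r w (F S)) (hC : ∀ S, lpNormW r w (F S) ≤ C) : MemLp r w f :=
  summable_of_sum_range_le (weightedTerm_nonneg hw f)
    (sum_range_le_rpow_of_tendsto hw hr hlim hF hC)

lemma lpNormW_le_of_tendsto (hw : ∀ k, 1 ≤ k → 0 ≤ w k) (hr : 0 < r)
    (hlim : ∀ k, Tendsto (fun S => F S (k + 1)) atTop (𝓝 (f (k + 1))))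
    (hF : ∀ S, MemLp r w (F S)) (hC : ∀ S, lpNormW r w (F S) ≤ C) : lpNormW r w f ≤ C := by
  have hC0 : 0 ≤ C := (lpNormW_nonneg hw (F 0)).trans (hC 0)
  calc lpNormW r w f ≤ (C ^ r) ^ (1 / r) :=
        Real.rpow_le_rpow (tsum_nonneg (weightedTerm_nonneg hw f))
          (Real.tsum_le_of_sum_range_le (weightedTerm_nonneg hw f)
            (sum_range_le_rpow_of_tendsto hw hr hlim hF hC)) (by positivity)
    _ = C := by rw [one_div, Real.rpow_rpow_inv hC0 hr.ne']

end Fatou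

end WeightedLp

def IsNonnegLpBounded (r : ℝ) (w : ℕ → ℝ) (T : (ℕ → ℝ) → ℕ → ℝ) (K : ℝ) : Prop :=
  ∀ f : ℕ → ℝ, (∀ k, 0 ≤ f k) → MemLp r w f →
    (∀ k, 0 ≤ T f k) ∧ MemLp r w (T f) ∧ lpNormW r w (T f) ≤ K * lpNormW r w f

/-- `rdfNdual r w h` unfolds to `rdfSeries (dualOp w) (dualOpNorm r w) h`. -/
def rdfSeries (T : (ℕ → ℝ) → ℕ → ℝ) (K : ℝ) (h : ℕ → ℝ) : ℕ → ℝ := fun n =>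
  ∑' s : ℕ, T^[s] h n / (2 ^ s * K ^ s)

lemma IsNonnegLpBounded.iterate {r K : ℝ} {w : ℕ → ℝ} {T : (ℕ → ℝ) → ℕ → ℝ}
    (hT : IsNonnegLpBounded r w T K) (hK : 0 ≤ K) (s : ℕ) :
    IsNonnegLpBounded r w T^[s] (K ^ s) := by
  induction s with
  | zero => exact fun f hf hfLp => ⟨hf, hfLp, by simp⟩
  | succ s ih =>
    intro f hf hfLp
    obtain ⟨hs0, hsLp, hsnorm⟩ := ih f hf hfLp
    obtain ⟨h0, hLp, hnorm⟩ := hT _ hs0 hsLp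
    rw [Function.iterate_succ_apply']
    refine ⟨h0, hLp, hnorm.trans ?_⟩
    rw [pow_succ', mul_assoc]
    exact mul_le_mul_of_nonneg_left hsnorm hK

section RubioDeFrancia

variable {r K : ℝ} {w h : ℕ → ℝ} {T : (ℕ → ℝ) → ℕ → ℝ} {n : ℕ}

lemma iterate_div_le (hw : ∀ k, 1 ≤ k → 0 < w k) (hr : 0 < r) (hT : IsNonnegLpBounded r w T K)
    (hK : 0 < K) (hh0 : ∀ k, 0 ≤ h k) (hhLp : MemLp r w h) (hn : 1 ≤ n) (s : ℕ) :
    T^[s] h n / (2 ^ s * K ^ s) ≤ lpNormW r w h * w n ^ (-(1 / r)) * (1 / 2) ^ s := by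
  obtain ⟨-, hsLp, hsnorm⟩ := hT.iterate hK.le s h hh0 hhLp
  have hpt := (le_abs_self _).trans
    (abs_le_lpNormW_mul_rpow (fun k hk => (hw k hk).le) hr hsLp hn (hw n hn))
  rw [div_le_iff₀ (by positivity)]
  calc T^[s] h n ≤ K ^ s * lpNormW r w h * w n ^ (-(1 / r)) :=
        hpt.trans (mul_le_mul_of_nonneg_right hsnorm (by have := hw n hn; positivity))
    _ = _ := by rw [div_pow, one_pow]; field_simp

lemma summable_iterate_div (hw : ∀ k, 1 ≤ k → 0 < w k) (hr : 0 < r)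
    (hT : IsNonnegLpBounded r w T K) (hK : 0 < K) (hh0 : ∀ k, 0 ≤ h k) (hhLp : MemLp r w h)
    (hn : 1 ≤ n) : Summable fun s : ℕ => T^[s] h n / (2 ^ s * K ^ s) :=
  (summable_geometric_two.mul_left _).of_nonneg_of_le
    (fun s => div_nonneg ((hT.iterate hK.le s h hh0 hhLp).1 n) (by positivity))
    (iterate_div_le hw hr hT hK hh0 hhLp hn)

lemma le_rdfSeries (hw : ∀ k, 1 ≤ k → 0 < w k) (hr : 0 < r) (hT : IsNonnegLpBounded r w T K)
    (hK : 0 < K) (hh0 : ∀ k, 0 ≤ h k) (hhLp : MemLp r w h) (hn : 1 ≤ n) :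
    h n ≤ rdfSeries T K h n := by
  calc h n = T^[0] h n / (2 ^ 0 * K ^ 0) := by simp
    _ ≤ rdfSeries T K h n := (summable_iterate_div hw hr hT hK hh0 hhLp hn).le_tsum 0 fun s _ =>
        div_nonneg ((hT.iterate hK.le s h hh0 hhLp).1 n) (by positivity)

lemma lpNormW_rdfSeries_le (hw : ∀ k, 1 ≤ k → 0 < w k) (hr : 1 ≤ r)
    (hT : IsNonnegLpBounded r w T K) (hK : 0 < K) (hh0 : ∀ k, 0 ≤ h k) (hhLp : MemLp r w h) :
    lpNormW r w (rdfSeries T K h) ≤ 2 * lpNormW r w h := by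
  have hr0 : 0 < r := by linarith
  have hw0 (k : ℕ) (hk : 1 ≤ k) : 0 ≤ w k := (hw k hk).le
  have hterm (s : ℕ) : MemLp r w (fun k => T^[s] h k / (2 ^ s * K ^ s)) ∧
      lpNormW r w (fun k => T^[s] h k / (2 ^ s * K ^ s)) ≤ lpNormW r w h * (1 / 2) ^ s := by
    obtain ⟨-, hsLp, hsnorm⟩ := hT.iterate hK.le s h hh0 hhLp
    refine ⟨hsLp.div_const (by positivity), ?_⟩
    rw [lpNormW_div_const hw0 hr0.ne' _ (by positivity), div_le_iff₀ (by positivity)]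
    calc lpNormW r w (T^[s] h) ≤ K ^ s * lpNormW r w h := hsnorm
      _ = _ := by rw [div_pow, one_pow]; field_simp
  have hpartial (S : ℕ) := memLp_sum_and_lpNormW_sum_le hw0 hr (range S)
    (fun s k => div_nonneg ((hT.iterate hK.le s h hh0 hhLp).1 k) (by positivity))
    (fun s => (hterm s).1)
  refine lpNormW_le_of_tendsto hw0 hr0 (fun k =>
      (summable_iterate_div hw hr0 hT hK hh0 hhLp k.succ_pos).hasSum.tendsto_sum_nat)
    (fun S => (hpartial S).1) fun S => (hpartial S).2.trans ?_
  calc ∑ s ∈ range S, lpNormW r w (fun k => T^[s] h k / (2 ^ s * K ^ s))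
      ≤ ∑ s ∈ range S, lpNormW r w h * (1 / 2) ^ s := sum_le_sum fun s _ => (hterm s).2
    _ ≤ 2 * lpNormW r w h := by
        rw [← mul_sum, mul_comm]
        exact mul_le_mul_of_nonneg_right (sum_geometric_two_le S) (lpNormW_nonneg hw0 h)

lemma intervalAvg_rdfSeries_mul (hw : ∀ k, 1 ≤ k → 0 < w k) (hr : 0 < r)
    (hT : IsNonnegLpBounded r w T K) (hK : 0 < K) (hh0 : ∀ k, 0 ≤ h k) (hhLp : MemLp r w h)
    {a b : ℕ} (ha : 1 ≤ a) :
    intervalAvg (fun k => rdfSeries T K h k * w k) a b =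
      ∑' s, intervalAvg (fun k => w k * T^[s] h k) a b / (2 ^ s * K ^ s) := by
  have hfun : (fun k => rdfSeries T K h k * w k) =
      fun k => ∑' s, w k * T^[s] h k / (2 ^ s * K ^ s) :=
    funext fun k => by rw [rdfSeries, ← tsum_mul_right]; exact tsum_congr fun s => by ring
  rw [hfun, intervalAvg_tsum fun k hk => by
    simpa only [mul_div_assoc] using (summable_iterate_div hw hr hT hK hh0 hhLp
      (ha.trans (mem_Icc.mp hk).1)).mul_left (w k)]
  simp only [intervalAvg_div_const]

lemma tsum_iterate_succ_div_le_rdfSeries (hw : ∀ k, 1 ≤ k → 0 < w k) (hr : 0 < r)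
    (hT : IsNonnegLpBounded r w T K) (hK : 0 < K) (hh0 : ∀ k, 0 ≤ h k) (hhLp : MemLp r w h)
    (hn : 1 ≤ n) :
    ∑' s, T^[s + 1] h n / (2 ^ (s + 1) * K ^ (s + 1)) ≤ rdfSeries T K h n := by
  rw [rdfSeries, (summable_iterate_div hw hr hT hK hh0 hhLp hn).tsum_eq_zero_add]
  exact le_add_of_nonneg_left (by simpa using hh0 n)

/-- Averages of `w · Tˢh` are bounded by `w · Tˢ⁺¹h`, so shifting the series by one term costs
the factor `2K`. -/
lemma isA1Bound_rdfSeries_mul (hw : ∀ k, 1 ≤ k → 0 < w k) (hr : 0 < r)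
    (hT : IsNonnegLpBounded r w T K) (hK : 0 < K) (hh0 : ∀ k, 0 ≤ h k) (hhLp : MemLp r w h)
    (hdom : ∀ f : ℕ → ℝ, (∀ k, 0 ≤ f k) → MemLp r w f → ∀ a b n : ℕ, 1 ≤ a → a ≤ n → n ≤ b →
      intervalAvg (fun k => w k * f k) a b ≤ w n * T f n) :
    IsA1Bound (fun k => rdfSeries T K h k * w k) (2 * K) := by
  intro a b n ha han hnb
  have hn := ha.trans han
  have hiter (s : ℕ) := hT.iterate hK.le s h hh0 hhLp
  have hstep (s : ℕ) : intervalAvg (fun k => w k * T^[s] h k) a b / (2 ^ s * K ^ s) ≤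
      w n * T^[s + 1] h n / (2 ^ s * K ^ s) := by
    rw [Function.iterate_succ_apply']
    exact div_le_div_of_nonneg_right (hdom _ (hiter s).1 (hiter s).2.1 a b n ha han hnb)
      (by positivity)
  have hshift (s : ℕ) : w n * T^[s + 1] h n / (2 ^ s * K ^ s) =
      2 * K * w n * (T^[s + 1] h n / (2 ^ (s + 1) * K ^ (s + 1))) := by
    field_simp; ring
  have hsum : Summable fun s => w n * T^[s + 1] h n / (2 ^ s * K ^ s) := by
    simpa only [hshift] using ((summable_nat_add_iff 1).mpr
      (summable_iterate_div hw hr hT hK hh0 hhLp hn)).mul_left (2 * K * w n)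
  have havg_nonneg (s : ℕ) : 0 ≤ intervalAvg (fun k => w k * T^[s] h k) a b / (2 ^ s * K ^ s) :=
    div_nonneg (intervalAvg_nonneg fun k hk => mul_nonneg (hw k (ha.trans hk)).le
      ((hiter s).1 k)) (by positivity)
  rw [intervalAvg_rdfSeries_mul hw hr hT hK hh0 hhLp ha]
  calc ∑' s, intervalAvg (fun k => w k * T^[s] h k) a b / (2 ^ s * K ^ s)
      ≤ ∑' s, w n * T^[s + 1] h n / (2 ^ s * K ^ s) :=
        Summable.tsum_le_tsum hstep (hsum.of_nonneg_of_le havg_nonneg hstep) hsum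
    _ = 2 * K * w n * ∑' s, T^[s + 1] h n / (2 ^ (s + 1) * K ^ (s + 1)) := by
        rw [← tsum_mul_left]; exact tsum_congr hshift
    _ ≤ 2 * K * (rdfSeries T K h n * w n) := by
        rw [mul_comm (rdfSeries T K h n), ← mul_assoc]
        exact mul_le_mul_of_nonneg_left
          (tsum_iterate_succ_div_le_rdfSeries hw hr hT hK hh0 hhLp hn)
          (by have := hw n hn; positivity)

end RubioDeFrancia

lemma summable_succ_of_sum_Ico_two_pow_le {F c : ℕ → ℝ} (hF : ∀ m, 1 ≤ m → 0 ≤ F m)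
    (hc : Summable c) (hblock : ∀ j, ∑ m ∈ Ico (2 ^ j) (2 ^ (j + 1)), F m ≤ c j) :
    Summable fun k => F (k + 1) := by
  have hc0 (j : ℕ) : 0 ≤ c j :=
    (sum_nonneg fun m hm => hF m (Nat.one_le_two_pow.trans (mem_Ico.mp hm).1)).trans (hblock j)
  have hdyadic (J : ℕ) :
      ∑ m ∈ Ico 1 (2 ^ J), F m = ∑ j ∈ range J, ∑ m ∈ Ico (2 ^ j) (2 ^ (j + 1)), F m := by
    induction J with
    | zero => simp
    | succ J ih =>
      rw [sum_range_succ, ← ih, sum_Ico_consecutive _ Nat.one_le_two_pow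
        (Nat.pow_le_pow_right two_pos J.le_succ)]
  refine summable_of_sum_range_le (c := ∑' j, c j) (fun k => hF _ k.succ_pos) fun N => ?_
  calc ∑ k ∈ range N, F (k + 1) = ∑ m ∈ Ico 1 (N + 1), F m := by
        rw [sum_Ico_eq_sum_range, Nat.add_sub_cancel]
        exact sum_congr rfl fun k _ => by rw [add_comm]
    _ ≤ ∑ m ∈ Ico 1 (2 ^ (N + 1)), F m :=
        sum_le_sum_of_subset_of_nonneg (Ico_subset_Ico_right (Nat.lt_two_pow_self).le)
          fun m hm _ => hF m (mem_Ico.mp hm).1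
    _ ≤ ∑ j ∈ range (N + 1), c j := hdyadic (N + 1) ▸ sum_le_sum fun j _ => hblock j
    _ ≤ ∑' j, c j := hc.sum_le_tsum _ fun j _ => hc0 j

lemma sum_Ico_two_pow_div_rpow_le {σ : ℕ → ℝ} (hσ : ∀ k, 1 ≤ k → 0 ≤ σ k) {q : ℝ} (hq : 0 ≤ q)
    (j : ℕ) : ∑ m ∈ Ico (2 ^ j) (2 ^ (j + 1)), σ m / (m : ℝ) ^ q ≤
      (∑ k ∈ Icc 1 (2 ^ (j + 1)), σ k) / ((2 ^ j : ℕ) : ℝ) ^ q := by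
  have h2j : (0 : ℝ) < (2 ^ j : ℕ) := by positivity
  rw [sum_div]
  refine (sum_le_sum fun m hm => ?_).trans (sum_le_sum_of_subset_of_nonneg (fun m hm => ?_)
    fun k hk _ => div_nonneg (hσ k (mem_Icc.mp hk).1) (by positivity))
  · have hm := mem_Ico.mp hm
    exact div_le_div_of_nonneg_left (hσ m (Nat.one_le_two_pow.trans hm.1)) (by positivity)
      (Real.rpow_le_rpow h2j.le (by exact_mod_cast hm.1) hq)
  · have hm := mem_Ico.mp hm
    exact mem_Icc.mpr ⟨Nat.one_le_two_pow.trans hm.1, hm.2.le⟩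

section MuckenhouptWeights

variable {p q : ℝ} {w : ℕ → ℝ} {n : ℕ}

lemma one_le_apNorm (hp : 1 < p) (hw1 : 0 < w 1) (hwAp : MemAp p w) : 1 ≤ apNorm p w := by
  have hquot : apQuot p w 1 = 1 := by
    rw [apQuot, Icc_self, sum_singleton, sum_singleton, Nat.cast_one, inv_one, one_mul, one_mul,
      ← Real.rpow_mul hw1.le, div_mul_cancel₀ _ (sub_ne_zero.mpr hp.ne'), Real.rpow_neg_one,
      mul_inv_cancel₀ hw1.ne']
  exact hquot ▸ le_csSup hwAp ⟨1, le_rfl, rfl⟩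

lemma sum_mul_sum_rpow_le_apNorm_mul_rpow (hw : ∀ k, 1 ≤ k → 0 < w k) (hwAp : MemAp p w)
    (hn : 1 ≤ n) :
    (∑ k ∈ Icc 1 n, w k) * (∑ k ∈ Icc 1 n, w k ^ (-1 / (p - 1))) ^ (p - 1) ≤
      apNorm p w * (n : ℝ) ^ p := by
  have hn0 : (0 : ℝ) < n := by exact_mod_cast hn
  have hquot : apQuot p w n * (n : ℝ) ^ p =
      (∑ k ∈ Icc 1 n, w k) * (∑ k ∈ Icc 1 n, w k ^ (-1 / (p - 1))) ^ (p - 1) := by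
    rw [apQuot, Real.mul_rpow (by positivity)
      (sum_nonneg fun k hk => Real.rpow_nonneg (hw k (mem_Icc.mp hk).1).le _),
      Real.inv_rpow hn0.le, Real.rpow_sub_one hn0.ne']
    field_simp
  rw [← hquot]
  exact mul_le_mul_of_nonneg_right (le_csSup hwAp ⟨n, hn, rfl⟩) (by positivity)

lemma sum_rpow_mul_sum_rpow_le_apNorm_rpow_mul_rpow (hpq : p.HolderConjugate q)
    (hw : ∀ k, 1 ≤ k → 0 < w k) (hwAp : MemAp p w) (hn : 1 ≤ n) :
    (∑ k ∈ Icc 1 n, w k ^ (-1 / (p - 1))) * (∑ k ∈ Icc 1 n, w k) ^ (q - 1) ≤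
      apNorm p w ^ (q - 1) * (n : ℝ) ^ q := by
  have hq1 : 0 < q - 1 := hpq.symm.sub_one_pos
  have hpq1 : (p - 1) * (q - 1) = 1 := by
    have := hpq.sub_one_mul_conj; linear_combination this
  have hpq2 : p * (q - 1) = q := by
    have := hpq.sub_one_mul_conj; linear_combination this
  have hσ : 0 ≤ ∑ k ∈ Icc 1 n, w k ^ (-1 / (p - 1)) :=
    sum_nonneg fun k hk => Real.rpow_nonneg (hw k (mem_Icc.mp hk).1).le _
  have hsw : 0 ≤ ∑ k ∈ Icc 1 n, w k := sum_nonneg fun k hk => (hw k (mem_Icc.mp hk).1).le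
  have hA : 0 ≤ apNorm p w := (one_le_apNorm hpq.lt (hw 1 le_rfl) hwAp).trans' zero_le_one
  have h := Real.rpow_le_rpow (by positivity)
    (sum_mul_sum_rpow_le_apNorm_mul_rpow hw hwAp hn) hq1.le
  rwa [Real.mul_rpow hsw (by positivity), ← Real.rpow_mul hσ, hpq1, Real.rpow_one, mul_comm,
    Real.mul_rpow hA (by positivity), ← Real.rpow_mul (Nat.cast_nonneg n), hpq2] at h

lemma card_rpow_le_sum_mul_sum_rpow (hp : 1 < p) (hw : ∀ k, 1 ≤ k → 0 < w k) {E : Finset ℕ}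
    (hE : ∀ k ∈ E, 1 ≤ k) :
    (#E : ℝ) ^ p ≤ (∑ k ∈ E, w k) * (∑ k ∈ E, w k ^ (-1 / (p - 1))) ^ (p - 1) := by
  set q := p / (p - 1)
  have hpq : p.HolderConjugate q := Real.HolderConjugate.conjExponent hp
  have hwE (k : ℕ) (hk : k ∈ E) : 0 < w k := hw k (hE k hk)
  have hσ : 0 ≤ ∑ k ∈ E, w k ^ (-1 / (p - 1)) :=
    sum_nonneg fun k hk => Real.rpow_nonneg (hwE k hk).le _
  have hholder := Real.inner_le_Lp_mul_Lq_of_nonneg E hpq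
    (f := fun k => w k ^ (1 / p)) (g := fun k => (w k ^ (-1 / (p - 1))) ^ (1 / q))
    (fun k hk => Real.rpow_nonneg (hwE k hk).le _)
    (fun k hk => Real.rpow_nonneg (Real.rpow_nonneg (hwE k hk).le _) _)
  have hone (k : ℕ) (hk : k ∈ E) : w k ^ (1 / p) * (w k ^ (-1 / (p - 1))) ^ (1 / q) = 1 := by
    rw [← Real.rpow_mul (hwE k hk).le, ← Real.rpow_add (hwE k hk)]
    convert Real.rpow_zero (w k) using 2
    have := hpq.sub_one_ne_zero
    have := hpq.ne_zero
    simp only [q]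
    field_simp
    ring
  rw [sum_congr rfl hone, sum_const, nsmul_one] at hholder
  have hpow {x : ℝ} (hx : 0 ≤ x) {s : ℝ} (hs : s ≠ 0) : (x ^ (1 / s)) ^ s = x := by
    rw [← Real.rpow_mul hx, one_div_mul_cancel hs, Real.rpow_one]
  rw [sum_congr rfl fun k hk => hpow (hwE k hk).le hpq.ne_zero,
    sum_congr rfl fun k hk => hpow (Real.rpow_nonneg (hwE k hk).le _) hpq.symm.ne_zero] at hholder
  have hsw : 0 ≤ ∑ k ∈ E, w k := sum_nonneg fun k hk => (hwE k hk).le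
  calc (#E : ℝ) ^ p
      ≤ ((∑ k ∈ E, w k) ^ (1 / p) * (∑ k ∈ E, w k ^ (-1 / (p - 1))) ^ (1 / q)) ^ p :=
        Real.rpow_le_rpow (Nat.cast_nonneg _) hholder hpq.nonneg
    _ = (∑ k ∈ E, w k) * (∑ k ∈ E, w k ^ (-1 / (p - 1))) ^ (p - 1) := by
        rw [Real.mul_rpow (by positivity) (by positivity), hpow hsw hpq.ne_zero,
          ← Real.rpow_mul hσ, one_div_mul_eq_div, hpq.div_conj_eq_sub_one]

def apDoublingRatio (p : ℝ) (w : ℕ → ℝ) : ℝ := 1 - (apNorm p w * 2 ^ p)⁻¹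

lemma one_le_apNorm_mul_two_rpow (hp : 1 < p) (hw1 : 0 < w 1) (hwAp : MemAp p w) :
    1 ≤ apNorm p w * 2 ^ p :=
  one_le_mul_of_one_le_of_one_le (one_le_apNorm hp hw1 hwAp)
    (Real.one_le_rpow one_le_two (by linarith))

lemma apDoublingRatio_nonneg (hp : 1 < p) (hw1 : 0 < w 1) (hwAp : MemAp p w) :
    0 ≤ apDoublingRatio p w :=
  sub_nonneg.mpr (inv_le_one_of_one_le₀ (one_le_apNorm_mul_two_rpow hp hw1 hwAp))

lemma apDoublingRatio_lt_one (hp : 1 < p) (hw1 : 0 < w 1) (hwAp : MemAp p w) :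
    apDoublingRatio p w < 1 :=
  sub_lt_self _ (inv_pos.mpr (zero_lt_one.trans_le (one_le_apNorm_mul_two_rpow hp hw1 hwAp)))

/-- Hölder's inequality on `(n, 2n]` bounds `n ^ p` by `w(n, 2n] σ(1, 2n] ^ (p - 1)`, which the
`A_p` condition at scale `2n` compares with `w[1, 2n]`. -/
lemma sum_Icc_two_mul_le (hp : 1 < p) (hw : ∀ k, 1 ≤ k → 0 < w k) (hwAp : MemAp p w)
    (hn : 1 ≤ n) :
    ∑ k ∈ Icc 1 (2 * n), w k ≤ apNorm p w * 2 ^ p * ∑ k ∈ Ioc n (2 * n), w k := by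
  have hE : ∀ k ∈ Ioc n (2 * n), 1 ≤ k := fun k hk => by have := (mem_Ioc.mp hk).1; omega
  have hsub : Ioc n (2 * n) ⊆ Icc 1 (2 * n) := fun k hk => by
    have := mem_Ioc.mp hk; exact mem_Icc.mpr ⟨by omega, this.2⟩
  set σ2n := ∑ k ∈ Icc 1 (2 * n), w k ^ (-1 / (p - 1))
  have hσ : 0 < σ2n ^ (p - 1) := Real.rpow_pos_of_pos (sum_pos
    (fun k hk => Real.rpow_pos_of_pos (hw k (mem_Icc.mp hk).1) _) ⟨1, by simp; omega⟩) _
  have hwE : 0 ≤ ∑ k ∈ Ioc n (2 * n), w k := sum_nonneg fun k hk => (hw k (hE k hk)).le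
  have hholder : (n : ℝ) ^ p ≤ (∑ k ∈ Ioc n (2 * n), w k) * σ2n ^ (p - 1) := by
    have h := card_rpow_le_sum_mul_sum_rpow hp hw hE
    rw [Nat.card_Ioc, show 2 * n - n = n by omega] at h
    refine h.trans (mul_le_mul_of_nonneg_left (Real.rpow_le_rpow
      (sum_nonneg fun k hk => Real.rpow_nonneg (hw k (hE k hk)).le _)
      (sum_le_sum_of_subset_of_nonneg hsub fun k hk _ =>
        Real.rpow_nonneg (hw k (mem_Icc.mp hk).1).le _) (by linarith)) hwE)
  have hAp := sum_mul_sum_rpow_le_apNorm_mul_rpow hw hwAp (by omega : 1 ≤ 2 * n)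
  rw [Nat.cast_mul, Nat.cast_two, Real.mul_rpow zero_le_two (Nat.cast_nonneg n)] at hAp
  have hA : 0 ≤ apNorm p w * 2 ^ p :=
    zero_le_one.trans (one_le_apNorm_mul_two_rpow hp (hw 1 le_rfl) hwAp)
  refine le_of_mul_le_mul_right ?_ hσ
  calc (∑ k ∈ Icc 1 (2 * n), w k) * σ2n ^ (p - 1) ≤ apNorm p w * 2 ^ p * (n : ℝ) ^ p := by
        linarith
    _ ≤ apNorm p w * 2 ^ p * ((∑ k ∈ Ioc n (2 * n), w k) * σ2n ^ (p - 1)) :=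
        mul_le_mul_of_nonneg_left hholder hA
    _ = _ := by ring

lemma sum_Icc_le_apDoublingRatio_mul (hp : 1 < p) (hw : ∀ k, 1 ≤ k → 0 < w k)
    (hwAp : MemAp p w) (hn : 1 ≤ n) :
    ∑ k ∈ Icc 1 n, w k ≤ apDoublingRatio p w * ∑ k ∈ Icc 1 (2 * n), w k := by
  have hA : 0 < apNorm p w * 2 ^ p :=
    zero_lt_one.trans_le (one_le_apNorm_mul_two_rpow hp (hw 1 le_rfl) hwAp)
  have hsplit : ∑ k ∈ Icc 1 n, w k + ∑ k ∈ Ioc n (2 * n), w k = ∑ k ∈ Icc 1 (2 * n), w k := by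
    rw [← zero_add 1, Icc_add_one_left_eq_Ioc, Icc_add_one_left_eq_Ioc]
    exact sum_Ioc_consecutive _ (Nat.zero_le n) (by omega)
  have h := sum_Icc_two_mul_le hp hw hwAp hn
  rw [← inv_mul_le_iff₀ hA] at h
  rw [apDoublingRatio, sub_mul, one_mul]
  linarith

lemma le_apDoublingRatio_pow_mul_sum_Icc_two_pow (hp : 1 < p) (hw : ∀ k, 1 ≤ k → 0 < w k)
    (hwAp : MemAp p w) (j : ℕ) :
    w 1 ≤ apDoublingRatio p w ^ j * ∑ k ∈ Icc 1 (2 ^ j), w k := by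
  induction j with
  | zero => simp
  | succ j ih =>
    calc w 1 ≤ _ := ih
      _ ≤ apDoublingRatio p w ^ j * (apDoublingRatio p w * ∑ k ∈ Icc 1 (2 * 2 ^ j), w k) :=
        mul_le_mul_of_nonneg_left
          (sum_Icc_le_apDoublingRatio_mul hp hw hwAp Nat.one_le_two_pow)
          (pow_nonneg (apDoublingRatio_nonneg hp (hw 1 le_rfl) hwAp) j)
      _ = _ := by rw [pow_succ, mul_assoc, ← pow_succ']

/-- The dual `A_{q}` bound combined with the geometric growth of `∑_{k ≤ 2 ^ j} w k`. -/
lemma sum_Icc_two_pow_rpow_mul_le (hpq : p.HolderConjugate q) (hw : ∀ k, 1 ≤ k → 0 < w k)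
    (hwAp : MemAp p w) (j : ℕ) :
    (∑ k ∈ Icc 1 (2 ^ j), w k ^ (-1 / (p - 1))) * w 1 ^ (q - 1) ≤
      (apDoublingRatio p w ^ (q - 1)) ^ j * (apNorm p w ^ (q - 1) * ((2 ^ j : ℕ) : ℝ) ^ q) := by
  have hθ := apDoublingRatio_nonneg hpq.lt (hw 1 le_rfl) hwAp
  have hσ : 0 ≤ ∑ k ∈ Icc 1 (2 ^ j), w k ^ (-1 / (p - 1)) :=
    sum_nonneg fun k hk => Real.rpow_nonneg (hw k (mem_Icc.mp hk).1).le _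
  have hsw : 0 ≤ ∑ k ∈ Icc 1 (2 ^ j), w k := sum_nonneg fun k hk => (hw k (mem_Icc.mp hk).1).le
  have hgrowth : w 1 ^ (q - 1) ≤
      (apDoublingRatio p w ^ (q - 1)) ^ j * (∑ k ∈ Icc 1 (2 ^ j), w k) ^ (q - 1) := by
    rw [Real.rpow_pow_comm hθ, ← Real.mul_rpow (by positivity) hsw]
    exact Real.rpow_le_rpow (hw 1 le_rfl).le
      (le_apDoublingRatio_pow_mul_sum_Icc_two_pow hpq.lt hw hwAp j) hpq.symm.sub_one_pos.le
  calc (∑ k ∈ Icc 1 (2 ^ j), w k ^ (-1 / (p - 1))) * w 1 ^ (q - 1)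
      ≤ (∑ k ∈ Icc 1 (2 ^ j), w k ^ (-1 / (p - 1))) *
          ((apDoublingRatio p w ^ (q - 1)) ^ j * (∑ k ∈ Icc 1 (2 ^ j), w k) ^ (q - 1)) :=
        mul_le_mul_of_nonneg_left hgrowth hσ
    _ = (apDoublingRatio p w ^ (q - 1)) ^ j *
          ((∑ k ∈ Icc 1 (2 ^ j), w k ^ (-1 / (p - 1))) * (∑ k ∈ Icc 1 (2 ^ j), w k) ^ (q - 1)) :=
        by ring
    _ ≤ _ := mul_le_mul_of_nonneg_left
        (sum_rpow_mul_sum_rpow_le_apNorm_rpow_mul_rpow hpq hw hwAp Nat.one_le_two_pow)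
        (pow_nonneg (Real.rpow_nonneg hθ _) j)

lemma summable_rpow_div_natCast_rpow (hpq : p.HolderConjugate q) (hw : ∀ k, 1 ≤ k → 0 < w k)
    (hwAp : MemAp p w) :
    Summable fun k : ℕ => w (k + 1) ^ (-1 / (p - 1)) / ((k + 1 : ℕ) : ℝ) ^ q := by
  set ρ := apDoublingRatio p w ^ (q - 1)
  set C := apNorm p w ^ (q - 1) * 2 ^ q / w 1 ^ (q - 1)
  have hw1 : 0 < w 1 ^ (q - 1) := Real.rpow_pos_of_pos (hw 1 le_rfl) _
  have hθ := apDoublingRatio_nonneg hpq.lt (hw 1 le_rfl) hwAp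
  have hρ : ρ < 1 := Real.rpow_lt_one hθ (apDoublingRatio_lt_one hpq.lt (hw 1 le_rfl) hwAp)
    hpq.symm.sub_one_pos
  have hblock (j : ℕ) : ∑ m ∈ Ico (2 ^ j) (2 ^ (j + 1)), w m ^ (-1 / (p - 1)) / (m : ℝ) ^ q ≤
      C * ρ ^ (j + 1) := by
    have h2j : (0 : ℝ) < (2 ^ j : ℕ) := by positivity
    have h2j1 : ((2 ^ (j + 1) : ℕ) : ℝ) ^ q = 2 ^ q * ((2 ^ j : ℕ) : ℝ) ^ q := by
      rw [← Real.mul_rpow zero_le_two h2j.le]; push_cast; ring_nf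
    refine (sum_Ico_two_pow_div_rpow_le (fun k hk => Real.rpow_nonneg (hw k hk).le _)
      hpq.symm.nonneg j).trans ?_
    rw [div_le_iff₀ (by positivity)]
    calc ∑ k ∈ Icc 1 (2 ^ (j + 1)), w k ^ (-1 / (p - 1))
        ≤ ρ ^ (j + 1) * (apNorm p w ^ (q - 1) * ((2 ^ (j + 1) : ℕ) : ℝ) ^ q) / w 1 ^ (q - 1) :=
          (le_div_iff₀ hw1).mpr (sum_Icc_two_pow_rpow_mul_le hpq hw hwAp (j + 1))
      _ = C * ρ ^ (j + 1) * ((2 ^ j : ℕ) : ℝ) ^ q := by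
          rw [h2j1]; simp only [C]; field_simp
  exact summable_succ_of_sum_Ico_two_pow_le (F := fun m => w m ^ (-1 / (p - 1)) / (m : ℝ) ^ q)
    (fun m hm => div_nonneg (Real.rpow_nonneg (hw m hm).le _) (by positivity))
    (((summable_nat_add_iff 1).mpr (summable_geometric_of_lt_one (by positivity) hρ)).mul_left C)
    hblock

end MuckenhouptWeights

section DualMaximalOperator

variable {p q K : ℝ} {w f : ℕ → ℝ} {a b n B : ℕ}

lemma dualOp_nonneg (hw : ∀ k, 1 ≤ k → 0 < w k) (hf : ∀ k, 0 ≤ f k) (n : ℕ) :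
    0 ≤ dualOp w f n := by
  rcases Nat.eq_zero_or_pos n with rfl | hn
  · rw [dualOp, maxOp_zero, zero_div]
  · exact div_nonneg (maxOp_nonneg (fun k hk => mul_nonneg (hw k hk).le (hf k)) n) (hw n hn).le

lemma abs_indicator_Iic_le (f : ℕ → ℝ) (B k : ℕ) : |(Set.Iic B).indicator f k| ≤ |f k| := by
  simpa only [Real.norm_eq_abs] using norm_indicator_le_norm_self (s := Set.Iic B) (f := f) (a := k)

lemma intervalAvg_mul_indicator_of_le (hbB : b ≤ B) :
    intervalAvg (fun k => w k * (Set.Iic B).indicator f k) a b =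
      intervalAvg (fun k => w k * f k) a b := by
  refine congrArg _ (sum_congr rfl fun k hk => ?_)
  dsimp only
  rw [Set.indicator_of_mem (Set.mem_Iic.mpr ((mem_Icc.mp hk).2.trans hbB))]

lemma sum_Icc_mul_indicator_le (hw : ∀ k, 1 ≤ k → 0 < w k) (hf : ∀ k, 0 ≤ f k) (ha : 1 ≤ a) :
    ∑ k ∈ Icc a b, w k * (Set.Iic B).indicator f k ≤ ∑ k ∈ Icc 1 B, w k * f k := by
  classical
  have hfilter : ∑ k ∈ Icc a b, w k * (Set.Iic B).indicator f k =
      ∑ k ∈ (Icc a b).filter (· ≤ B), w k * f k := by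
    rw [sum_filter]
    exact sum_congr rfl fun k _ => by
      by_cases hk : k ≤ B <;> simp [hk]
  rw [hfilter]
  refine sum_le_sum_of_subset_of_nonneg (fun k hk => ?_) fun k hk _ =>
    mul_nonneg (hw k (mem_Icc.mp hk).1).le (hf k)
  simp only [mem_filter, mem_Icc] at hk ⊢
  omega

lemma intervalAvg_mul_indicator_le (hw : ∀ k, 1 ≤ k → 0 < w k) (hf : ∀ k, 0 ≤ f k)
    (ha : 1 ≤ a) (han : a ≤ n) (hnb : n ≤ b) :
    intervalAvg (fun k => w k * (Set.Iic B).indicator f k) a b ≤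
      (B + 1) * (∑ k ∈ Icc 1 B, w k * f k) / n := by
  have hS : 0 ≤ ∑ k ∈ Icc 1 B, w k * f k :=
    sum_nonneg fun k hk => mul_nonneg (hw k (mem_Icc.mp hk).1).le (hf k)
  have hn : (0 : ℝ) < n := by exact_mod_cast ha.trans han
  by_cases haB : B < a
  · have hzero : intervalAvg (fun k => w k * (Set.Iic B).indicator f k) a b = 0 := by
      refine mul_eq_zero_of_right _ (sum_eq_zero fun k hk => ?_)
      have : ¬ k ≤ B := by have := (mem_Icc.mp hk).1; omega
      simp [this]
    rw [hzero]; positivity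
  · have hcard : n ≤ (B + 1) * #(Icc a b) := by
      have h1 : n ≤ B + (b + 1 - a) := by omega
      have h2 : 1 ≤ b + 1 - a := by omega
      rw [Nat.card_Icc]; nlinarith
    have hcard' : (n : ℝ) ≤ (B + 1) * #(Icc a b) := by exact_mod_cast hcard
    have hpos : (0 : ℝ) < #(Icc a b) := by
      rw [Nat.card_Icc]; exact_mod_cast (by omega : 0 < b + 1 - a)
    rw [intervalAvg, inv_mul_le_iff₀ hpos, ← mul_div_assoc, le_div_iff₀ hn]
    calc (∑ k ∈ Icc a b, w k * (Set.Iic B).indicator f k) * n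
        ≤ (∑ k ∈ Icc 1 B, w k * f k) * ((B + 1) * #(Icc a b)) :=
          mul_le_mul (sum_Icc_mul_indicator_le hw hf ha) hcard' hn.le hS
      _ = _ := by ring

lemma memLp_dualOp_indicator (hpq : p.HolderConjugate q) (hw : ∀ k, 1 ≤ k → 0 < w k)
    (hwAp : MemAp p w) (hf : ∀ k, 0 ≤ f k) (B : ℕ) :
    MemLp q w (dualOp w ((Set.Iic B).indicator f)) := by
  set D := (B + 1) * ∑ k ∈ Icc 1 B, w k * f k
  have hD : 0 ≤ D := mul_nonneg (by positivity)
    (sum_nonneg fun k hk => mul_nonneg (hw k (mem_Icc.mp hk).1).le (hf k))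
  have hexp : -1 / (p - 1) = 1 - q := by
    rw [hpq.conjugate_eq]; field_simp [hpq.sub_one_ne_zero]; ring
  refine ((summable_rpow_div_natCast_rpow hpq hw hwAp).mul_left (D ^ q)).of_nonneg_of_le
    (weightedTerm_nonneg (fun k hk => (hw k hk).le) _) fun k => ?_
  have hm : (0 : ℝ) < (k + 1 : ℕ) := by positivity
  have hwm := hw (k + 1) k.succ_pos
  have hdual0 := dualOp_nonneg hw (Set.indicator_nonneg (s := Set.Iic B) fun j _ => hf j) (k + 1)
  have hdual : dualOp w ((Set.Iic B).indicator f) (k + 1) ≤ D / (k + 1 : ℕ) / w (k + 1) :=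
    div_le_div_of_nonneg_right (maxOp_le k.succ_pos fun a b ha han hnb =>
      intervalAvg_mul_indicator_le hw hf ha han hnb) hwm.le
  calc w (k + 1) * |dualOp w ((Set.Iic B).indicator f) (k + 1)| ^ q
      ≤ w (k + 1) * (D / (k + 1 : ℕ) / w (k + 1)) ^ q := by
        rw [abs_of_nonneg hdual0]
        gcongr
        exact hpq.symm.nonneg
    _ = D ^ q * (w (k + 1) ^ (-1 / (p - 1)) / ((k + 1 : ℕ) : ℝ) ^ q) := by
        rw [Real.div_rpow (by positivity) hwm.le, Real.div_rpow hD hm.le, hexp,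
          Real.rpow_sub hwm, Real.rpow_one]
        ring

lemma lpNormW_dualOp_indicator_le (hq : 0 ≤ q) (hw : ∀ k, 1 ≤ k → 0 < w k) (hK : 0 ≤ K)
    (hM : IsDualBound q w K) (hf : ∀ k, 0 ≤ f k) (hfLp : MemLp q w f) (B : ℕ) :
    lpNormW q w (dualOp w ((Set.Iic B).indicator f)) ≤ K * lpNormW q w f := by
  have hw0 (k : ℕ) (hk : 1 ≤ k) : 0 ≤ w k := (hw k hk).le
  have hind (k : ℕ) (_ : 1 ≤ k) := abs_indicator_Iic_le f B k
  exact (hM _ (Set.indicator_nonneg fun k _ => hf k) (hfLp.mono hw0 hq hind)).trans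
    (mul_le_mul_of_nonneg_left (lpNormW_mono hw0 hq hfLp hind) hK)

lemma intervalAvg_mul_le_of_isDualBound (hpq : p.HolderConjugate q) (hw : ∀ k, 1 ≤ k → 0 < w k)
    (hwAp : MemAp p w) (hK : 0 ≤ K) (hM : IsDualBound q w K) (hf : ∀ k, 0 ≤ f k)
    (hfLp : MemLp q w f) (ha : 1 ≤ a) (han : a ≤ n) (hnb : n ≤ b) :
    intervalAvg (fun k => w k * f k) a b ≤ w n * (K * lpNormW q w f * w n ^ (-(1 / q))) := by
  have hw0 (k : ℕ) (hk : 1 ≤ k) : 0 ≤ w k := (hw k hk).le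
  have hwn := hw n (ha.trans han)
  set g := (Set.Iic b).indicator f
  calc intervalAvg (fun k => w k * f k) a b
      = intervalAvg (fun k => w k * g k) a b := (intervalAvg_mul_indicator_of_le le_rfl).symm
    _ ≤ maxOp (fun k => w k * g k) n := intervalAvg_le_maxOp
        (fun a b ha han hnb => intervalAvg_mul_indicator_le hw hf ha han hnb) ha han hnb
    _ = w n * dualOp w g n := (mul_div_cancel₀ _ hwn.ne').symm
    _ ≤ w n * (lpNormW q w (dualOp w g) * w n ^ (-(1 / q))) := by
        refine mul_le_mul_of_nonneg_left ((le_abs_self _).trans ?_) hwn.le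
        exact abs_le_lpNormW_mul_rpow hw0 hpq.symm.pos
          (memLp_dualOp_indicator hpq hw hwAp hf b) (ha.trans han) hwn
    _ ≤ w n * (K * lpNormW q w f * w n ^ (-(1 / q))) := by
        gcongr
        exact lpNormW_dualOp_indicator_le hpq.symm.nonneg hw hK hM hf hfLp b

lemma intervalAvg_mul_le_mul_dualOp (hpq : p.HolderConjugate q) (hw : ∀ k, 1 ≤ k → 0 < w k)
    (hwAp : MemAp p w) (hK : 0 ≤ K) (hM : IsDualBound q w K) (hf : ∀ k, 0 ≤ f k)
    (hfLp : MemLp q w f) (ha : 1 ≤ a) (han : a ≤ n) (hnb : n ≤ b) :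
    intervalAvg (fun k => w k * f k) a b ≤ w n * dualOp w f n := by
  rw [dualOp, mul_div_cancel₀ _ (hw n (ha.trans han)).ne']
  exact intervalAvg_le_maxOp (fun a b ha han hnb =>
    intervalAvg_mul_le_of_isDualBound hpq hw hwAp hK hM hf hfLp ha han hnb) ha han hnb

lemma tendsto_dualOp_indicator (hpq : p.HolderConjugate q) (hw : ∀ k, 1 ≤ k → 0 < w k)
    (hwAp : MemAp p w) (hK : 0 ≤ K) (hM : IsDualBound q w K) (hf : ∀ k, 0 ≤ f k)
    (hfLp : MemLp q w f) (hn : 1 ≤ n) :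
    Tendsto (fun B => dualOp w ((Set.Iic B).indicator f) n) atTop (𝓝 (dualOp w f n)) := by
  have hbound (B : ℕ) := fun a b (ha : 1 ≤ a) (han : a ≤ n) (hnb : n ≤ b) =>
    intervalAvg_mul_indicator_le (B := B) hw hf ha han hnb
  refine Tendsto.div_const (tendsto_atTop_isLUB (fun B B' hBB' => ?_) ⟨?_, fun u hu => ?_⟩) (w n)
  · refine maxOp_le hn fun a b ha han hnb => (intervalAvg_mono fun k hk _ => ?_).trans
      (intervalAvg_le_maxOp (hbound B') ha han hnb)
    exact mul_le_mul_of_nonneg_left (Set.indicator_le_indicator_of_subset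
      (Set.Iic_subset_Iic.mpr hBB') (fun k => hf k) k) (hw k (ha.trans hk)).le
  · rintro _ ⟨B, rfl⟩
    refine maxOp_le hn fun a b ha han hnb => (intervalAvg_mono fun k hk _ => ?_).trans
      (intervalAvg_le_maxOp (fun a b ha han hnb =>
        intervalAvg_mul_le_of_isDualBound hpq hw hwAp hK hM hf hfLp ha han hnb) ha han hnb)
    exact mul_le_mul_of_nonneg_left (Set.indicator_le_self' (fun k _ => hf k) k)
      (hw k (ha.trans hk)).le
  · refine maxOp_le hn fun a b ha han hnb => ?_
    rw [← intervalAvg_mul_indicator_of_le le_rfl]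
    exact (intervalAvg_le_maxOp (hbound b) ha han hnb).trans (hu ⟨b, rfl⟩)

lemma memLp_dualOp (hpq : p.HolderConjugate q) (hw : ∀ k, 1 ≤ k → 0 < w k)
    (hwAp : MemAp p w) (hK : 0 ≤ K) (hM : IsDualBound q w K) (hf : ∀ k, 0 ≤ f k)
    (hfLp : MemLp q w f) : MemLp q w (dualOp w f) := by
  exact MemLp.of_tendsto (fun k hk => (hw k hk).le) hpq.symm.pos
    (fun k => tendsto_dualOp_indicator hpq hw hwAp hK hM hf hfLp k.succ_pos)
    (memLp_dualOp_indicator hpq hw hwAp hf)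
    (lpNormW_dualOp_indicator_le hpq.symm.nonneg hw hK hM hf hfLp)

lemma IsDualBound.isNonnegLpBounded (hpq : p.HolderConjugate q) (hw : ∀ k, 1 ≤ k → 0 < w k)
    (hwAp : MemAp p w) (hK : 0 ≤ K) (hM : IsDualBound q w K) :
    IsNonnegLpBounded q w (dualOp w) K := fun f hf hfLp =>
  ⟨dualOp_nonneg hw hf, memLp_dualOp hpq hw hwAp hK hM hf hfLp, hM f hf hfLp⟩

end DualMaximalOperator

theorem dual_rdf_algorithm_general (p p' : ℝ) (hp : 1 < p) (hp' : p' = p / (p - 1))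
    (w : ℕ → ℝ) (hw : ∀ k, 1 ≤ k → 0 < w k) (hwAp : MemAp p w)
    (hM : IsDualBound p' w (dualOpNorm p' w)) (hMpos : 0 < dualOpNorm p' w)
    (h : ℕ → ℝ) (hh0 : ∀ k, 0 ≤ h k) (hhLp : MemLp p' w h) :
    (∀ n, 1 ≤ n → h n ≤ rdfNdual p' w h n) ∧
      lpNormW p' w (rdfNdual p' w h) ≤ 2 * lpNormW p' w h ∧
      MemA1 (fun k => rdfNdual p' w h k * w k) ∧
      a1Norm (fun k => rdfNdual p' w h k * w k) ≤ 2 * dualOpNorm p' w := by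
  have hpq : p.HolderConjugate p' := (Real.holderConjugate_iff_eq_conjExponent hp).mpr hp'
  have hT := hM.isNonnegLpBounded hpq hw hwAp hMpos.le
  have hA1 : IsA1Bound (fun k => rdfNdual p' w h k * w k) (2 * dualOpNorm p' w) :=
    isA1Bound_rdfSeries_mul hw hpq.symm.pos hT hMpos hh0 hhLp fun f hf hfLp _ _ _ ha han hnb =>
      intervalAvg_mul_le_mul_dualOp hpq hw hwAp hMpos.le hM hf hfLp ha han hnb
  exact ⟨fun n hn => le_rdfSeries hw hpq.symm.pos hT hMpos hh0 hhLp hn,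
    lpNormW_rdfSeries_le hw hpq.symm.lt.le hT hMpos hh0 hhLp,
    ⟨_, hA1⟩, a1Norm_le_of_isA1Bound hA1 (by positivity)⟩

/-- Properties of the discrete dual Rubio de Francia algorithm `N'`. -/
theorem dual_rdf_algorithm (p p' : ℝ) (hp : 1 < p) (hp' : p' = p / (p - 1))
    (w : ℕ → ℝ) (hw : ∀ k, 1 ≤ k → 0 < w k) (hwAp : MemAp p w)
    (hM : IsDualBound p' w (dualOpNorm p' w)) (hMpos : 0 < dualOpNorm p' w)
    (h : ℕ → ℝ) (hh0 : ∀ k, 0 ≤ h k) (hhLp : MemLp p' w h)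
    (hne : ∃ k, 1 ≤ k ∧ h k ≠ 0) :
    (∀ n, 1 ≤ n → h n ≤ rdfNdual p' w h n) ∧
      lpNormW p' w (rdfNdual p' w h) ≤ 2 * lpNormW p' w h ∧
      MemA1 (fun k => rdfNdual p' w h k * w k) ∧
      a1Norm (fun k => rdfNdual p' w h k * w k) ≤ 2 * dualOpNorm p' w :=
  dual_rdf_algorithm_general p p' hp hp' w hw hwAp hM hMpos h hh0 hhLp
end
end

section
/- The discrete inequality ∑_{k=1}^{N} (1/k²)(∑_{s=1}^{k} v(s))^{β} ≤ β^{β} ∑_{k=1}^{N} k^{α−1} v(k)^{β} (the direct discretization of the corresponding continuous Hardy-type inequality with β − α = 1) fails in general: for N = 4, β = 6/5, α = 1/5 and the sequence v(1) = 100, v(2) = v(3) = v(4) = 1, one has ∑_{k=1}^{4} (1/k²)(∑_{s=1}^{k} v(s))^{6/5} > (6/5)^{6/5} · ∑_{k=1}^{4} k^{−4/5} v(k)^{6/5}. -/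
open Finset Real Filter

noncomputable section

/-! Write `X = 100 ^ (6/5)`. Every partial sum `∑_{s ≤ k} v(s)` is at least `v(1) = 100`, so
`∑_k k⁻² (∑_{s ≤ k} v(s))^(6/5) ≥ X · ∑_{k ≤ 4} k⁻² = 205/144 · X`, while `k ^ (-4/5) ≤ 1` gives
`∑_k k^(-4/5) v(k)^(6/5) ≤ X + 3`. As `(6/5)^(6/5) ≤ 13/10` and `X ≥ 100`, the first sum wins. -/

theorem rpow_natCast_div_le_iff {a b : ℝ} (ha : 0 ≤ a) (hb : 0 ≤ b) {m n : ℕ} (hn : n ≠ 0) :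
    a ^ ((m : ℝ) / n) ≤ b ↔ a ^ m ≤ b ^ n := by
  rw [← pow_le_pow_iff_left₀ (by positivity) hb hn, ← Real.rpow_natCast _ n, ← Real.rpow_mul ha,
    div_mul_cancel₀ _ (by exact_mod_cast hn), Real.rpow_natCast]

theorem sum_Icc_one_four {M : Type*} [AddCommMonoid M] (f : ℕ → M) :
    ∑ k ∈ Icc 1 4, f k = f 1 + f 2 + f 3 + f 4 := by
  simp [Finset.sum_Icc_succ_top, add_assoc]

theorem six_fifths_rpow_six_fifths_le : (6 / 5 : ℝ) ^ (6 / 5 : ℝ) ≤ 13 / 10 := by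
  have h := rpow_natCast_div_le_iff (a := 6 / 5) (b := 13 / 10) (m := 6) (n := 5)
    (by norm_num) (by norm_num) (by norm_num)
  norm_num at h ⊢
  exact h

/-- Counterexample showing the direct discretization of the
continuous Hardy-type inequality fails: with `N = 4`, `β = 6/5`, `α = 1/5` and
`v = (100, 1, 1, 1)`, the left side exceeds `β^β` times the right side. -/
theorem discretization_fails :
    (6 / 5 : ℝ) ^ (6 / 5 : ℝ) *
        ∑ k ∈ Finset.Icc (1 : ℕ) 4,
          (k : ℝ) ^ (-(4 : ℝ) / 5) *
            ((if k = 1 then (100 : ℝ) else 1) ^ (6 / 5 : ℝ)) <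
      ∑ k ∈ Finset.Icc (1 : ℕ) 4,
        ((k : ℝ) ^ 2)⁻¹ *
          (∑ s ∈ Finset.Icc (1 : ℕ) k, (if s = 1 then (100 : ℝ) else 1)) ^ (6 / 5 : ℝ) := by
  set v : ℕ → ℝ := fun s => if s = 1 then 100 else 1 with hv
  set X : ℝ := (100 : ℝ) ^ (6 / 5 : ℝ)
  have hX : 100 ≤ X := Real.self_le_rpow_of_one_le (by norm_num) (by norm_num)
  have hweighted : ∑ k ∈ Icc (1 : ℕ) 4, (k : ℝ) ^ (-(4 : ℝ) / 5) * v k ^ (6 / 5 : ℝ) ≤ X + 3 := by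
    calc ∑ k ∈ Icc (1 : ℕ) 4, (k : ℝ) ^ (-(4 : ℝ) / 5) * v k ^ (6 / 5 : ℝ)
        ≤ ∑ k ∈ Icc (1 : ℕ) 4, v k ^ (6 / 5 : ℝ) := by
          refine sum_le_sum fun k hk => mul_le_of_le_one_left (by positivity) ?_
          exact Real.rpow_le_one_of_one_le_of_nonpos (by exact_mod_cast (mem_Icc.1 hk).1)
            (by norm_num)
      _ = X + 3 := by simp only [sum_Icc_one_four, hv]; norm_num; ring
  have hpartial : 205 / 144 * X ≤ ∑ k ∈ Icc (1 : ℕ) 4,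
      ((k : ℝ) ^ 2)⁻¹ * (∑ s ∈ Icc (1 : ℕ) k, v s) ^ (6 / 5 : ℝ) := by
    calc 205 / 144 * X = ∑ k ∈ Icc (1 : ℕ) 4, ((k : ℝ) ^ 2)⁻¹ * X := by
          rw [← sum_mul, sum_Icc_one_four]; norm_num
      _ ≤ _ := by
          refine sum_le_sum fun k hk => mul_le_mul_of_nonneg_left ?_ (by positivity)
          have h100 : (100 : ℝ) ≤ ∑ s ∈ Icc (1 : ℕ) k, v s := single_le_sum (f := v)
            (fun s _ => by positivity) (mem_Icc.2 ⟨le_rfl, (mem_Icc.1 hk).1⟩)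
          exact Real.rpow_le_rpow (by norm_num) h100 (by norm_num)
  calc (6 / 5 : ℝ) ^ (6 / 5 : ℝ) *
        ∑ k ∈ Icc (1 : ℕ) 4, (k : ℝ) ^ (-(4 : ℝ) / 5) * v k ^ (6 / 5 : ℝ)
      ≤ 13 / 10 * (X + 3) :=
        mul_le_mul six_fifths_rpow_six_fifths_le hweighted
          (sum_nonneg fun k _ => by positivity) (by norm_num)
    _ < 205 / 144 * X := by linarith
    _ ≤ _ := hpartial
end
end
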